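/- (Uniqueness conclusion of Theorem 1.) Let X ⊆ ℝⁿ with 0 ∈ X, let u_i : ℝⁿ → ℝᵐ and w_i : ℝⁿ → ℝ^q be continuous policies, and let V : ℝⁿ → ℝ and W : ℝⁿ → ℝ be continuously differentiable with V(0) = W(0) = 0. Suppose that V and W each satisfy the off-policy integral identity along every trajectory (x, u, w) remaining in X (for all continuous inputs u, w and all subintervals of the trajectory's interval of definition). Suppose moreover that for every x̄ ∈ X there exist T ≥ 0 and a differentiable closed-loop trajectory x : [0, T] → X with x'(τ) = f(x(τ)) + g(x(τ))·u_i(x(τ)) + k(x(τ))·w_i(x(τ)) for all τ ∈ [0, T], x(0) = 0 and x(T) = x̄. Then V = W on X; i.e., the solution of the off-policy integral equation is unique and agrees with the solution of the linear PDE (LFE). -/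

import Mathlib

open Matrix MeasureTheory

/-- Matrix–vector multiplication, valued in Euclidean space. -/
noncomputable def mv {a b : ℕ} (M : Matrix (Fin a) (Fin b) ℝ)
    (v : EuclideanSpace ℝ (Fin b)) : EuclideanSpace ℝ (Fin a) :=
  WithLp.toLp 2 (M.mulVec v)

/-- `V` satisfies the linear PDE (LFE) for the policies `ui, wi` at the point `x`:
`⟨∇V(x), f(x) + g(x) uᵢ(x) + k(x) wᵢ(x)⟩ + ‖h(x)‖² + ⟨uᵢ(x), R uᵢ(x)⟩ - γ²‖wᵢ(x)‖² = 0`. -/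
def LFEAt {n m q p : ℕ}
    (f : EuclideanSpace ℝ (Fin n) → EuclideanSpace ℝ (Fin n))
    (g : EuclideanSpace ℝ (Fin n) → Matrix (Fin n) (Fin m) ℝ)
    (k : EuclideanSpace ℝ (Fin n) → Matrix (Fin n) (Fin q) ℝ)
    (h : EuclideanSpace ℝ (Fin n) → EuclideanSpace ℝ (Fin p))
    (R : Matrix (Fin m) (Fin m) ℝ) (γ : ℝ)
    (ui : EuclideanSpace ℝ (Fin n) → EuclideanSpace ℝ (Fin m))
    (wi : EuclideanSpace ℝ (Fin n) → EuclideanSpace ℝ (Fin q))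
    (V : EuclideanSpace ℝ (Fin n) → ℝ)
    (x : EuclideanSpace ℝ (Fin n)) : Prop :=
  (inner ℝ (gradient V x) (f x + mv (g x) (ui x) + mv (k x) (wi x)) : ℝ)
    + ‖h x‖^2 + (inner ℝ (ui x) (mv R (ui x)) : ℝ) - γ^2 * ‖wi x‖^2 = 0

/-- `V` satisfies the off-policy integral identity (equation (4.3)) for the policies
`ui, wi` along the trajectory `(x, u, w)` on the interval `[t₁, t₂]`. -/
noncomputable def OffPolicyId {n m q p : ℕ}
    (g : EuclideanSpace ℝ (Fin n) → Matrix (Fin n) (Fin m) ℝ)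
    (k : EuclideanSpace ℝ (Fin n) → Matrix (Fin n) (Fin q) ℝ)
    (h : EuclideanSpace ℝ (Fin n) → EuclideanSpace ℝ (Fin p))
    (R : Matrix (Fin m) (Fin m) ℝ) (γ : ℝ)
    (ui : EuclideanSpace ℝ (Fin n) → EuclideanSpace ℝ (Fin m))
    (wi : EuclideanSpace ℝ (Fin n) → EuclideanSpace ℝ (Fin q))
    (V : EuclideanSpace ℝ (Fin n) → ℝ)
    (x : ℝ → EuclideanSpace ℝ (Fin n))
    (u : ℝ → EuclideanSpace ℝ (Fin m))
    (w : ℝ → EuclideanSpace ℝ (Fin q))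
    (t₁ t₂ : ℝ) : Prop :=
  (∫ τ in t₁..t₂, (inner ℝ (gradient V (x τ)) (mv (g (x τ)) (u τ - ui (x τ))) : ℝ))
    + (∫ τ in t₁..t₂, (inner ℝ (gradient V (x τ)) (mv (k (x τ)) (w τ - wi (x τ))) : ℝ))
    + V (x t₁) - V (x t₂)
    = ∫ τ in t₁..t₂,
        (‖h (x τ)‖^2 + (inner ℝ (ui (x τ)) (mv R (ui (x τ))) : ℝ) - γ^2 * ‖wi (x τ)‖^2)

/-!
Along a closed-loop trajectory, i.e. with inputs `u = uᵢ ∘ x` and `w = wᵢ ∘ x`, both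
correction integrals of the off-policy identity vanish, so the identity pins down the increment
`V (x t₁) - V (x t₂)` as the accumulated cost, independently of `V`. Two solutions therefore
have the same increment along a closed-loop trajectory from `0` to `x̄`; since both vanish at
`0`, they agree at `x̄`.
-/

theorem mv_zero {a b : ℕ} (M : Matrix (Fin a) (Fin b) ℝ) : mv M 0 = 0 := by
  simp [mv]

section OffPolicy

variable {n m q p : ℕ}
  {g : EuclideanSpace ℝ (Fin n) → Matrix (Fin n) (Fin m) ℝ}
  {k : EuclideanSpace ℝ (Fin n) → Matrix (Fin n) (Fin q) ℝ}
  {h : EuclideanSpace ℝ (Fin n) → EuclideanSpace ℝ (Fin p)}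
  {R : Matrix (Fin m) (Fin m) ℝ} {γ : ℝ}
  {ui : EuclideanSpace ℝ (Fin n) → EuclideanSpace ℝ (Fin m)}
  {wi : EuclideanSpace ℝ (Fin n) → EuclideanSpace ℝ (Fin q)}
  {V W : EuclideanSpace ℝ (Fin n) → ℝ} {x : ℝ → EuclideanSpace ℝ (Fin n)} {t₁ t₂ : ℝ}

theorem OffPolicyId.sub_eq_integral_of_closedLoop
    (hId : OffPolicyId g k h R γ ui wi V x (ui ∘ x) (wi ∘ x) t₁ t₂) :
    V (x t₁) - V (x t₂) = ∫ τ in t₁..t₂,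
      (‖h (x τ)‖^2 + (inner ℝ (ui (x τ)) (mv R (ui (x τ))) : ℝ) - γ^2 * ‖wi (x τ)‖^2) := by
  simpa [OffPolicyId, mv_zero] using hId

theorem OffPolicyId.sub_eq_sub_of_closedLoop
    (hV : OffPolicyId g k h R γ ui wi V x (ui ∘ x) (wi ∘ x) t₁ t₂)
    (hW : OffPolicyId g k h R γ ui wi W x (ui ∘ x) (wi ∘ x) t₁ t₂) :
    V (x t₁) - V (x t₂) = W (x t₁) - W (x t₂) :=
  hV.sub_eq_integral_of_closedLoop.trans hW.sub_eq_integral_of_closedLoop.symm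

end OffPolicy

theorem Continuous.comp_continuousOn_of_hasDerivAt {E F : Type*} [NormedAddCommGroup E]
    [NormedSpace ℝ E] [TopologicalSpace F] {x : ℝ → E} {x' : ℝ → E} {s : Set ℝ} {φ : E → F} (hφ : Continuous φ)
    (hx : ∀ τ ∈ s, HasDerivAt x (x' τ) τ) : ContinuousOn (φ ∘ x) s :=
  hφ.comp_continuousOn fun τ hτ => (hx τ hτ).continuousAt.continuousWithinAt

theorem off_policy_solution_unique_general {n m q p : ℕ}
    (f : EuclideanSpace ℝ (Fin n) → EuclideanSpace ℝ (Fin n))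
    (g : EuclideanSpace ℝ (Fin n) → Matrix (Fin n) (Fin m) ℝ)
    (k : EuclideanSpace ℝ (Fin n) → Matrix (Fin n) (Fin q) ℝ)
    (h : EuclideanSpace ℝ (Fin n) → EuclideanSpace ℝ (Fin p))
    (R : Matrix (Fin m) (Fin m) ℝ)
    (γ : ℝ)
    (X : Set (EuclideanSpace ℝ (Fin n)))
    (ui : EuclideanSpace ℝ (Fin n) → EuclideanSpace ℝ (Fin m)) (hui : Continuous ui)
    (wi : EuclideanSpace ℝ (Fin n) → EuclideanSpace ℝ (Fin q)) (hwi : Continuous wi)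
    (V W : EuclideanSpace ℝ (Fin n) → ℝ)
    (hV0 : V 0 = 0) (hW0 : W 0 = 0)
    (hIdV : ∀ (x : ℝ → EuclideanSpace ℝ (Fin n)) (u : ℝ → EuclideanSpace ℝ (Fin m))
        (w : ℝ → EuclideanSpace ℝ (Fin q)) (t₁ t₂ : ℝ), t₁ ≤ t₂ →
      ContinuousOn u (Set.Icc t₁ t₂) → ContinuousOn w (Set.Icc t₁ t₂) →
      (∀ τ ∈ Set.Icc t₁ t₂, x τ ∈ X) →
      (∀ τ ∈ Set.Icc t₁ t₂, HasDerivAt x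
        (f (x τ) + mv (g (x τ)) (u τ) + mv (k (x τ)) (w τ)) τ) →
      OffPolicyId g k h R γ ui wi V x u w t₁ t₂)
    (hIdW : ∀ (x : ℝ → EuclideanSpace ℝ (Fin n)) (u : ℝ → EuclideanSpace ℝ (Fin m))
        (w : ℝ → EuclideanSpace ℝ (Fin q)) (t₁ t₂ : ℝ), t₁ ≤ t₂ →
      ContinuousOn u (Set.Icc t₁ t₂) → ContinuousOn w (Set.Icc t₁ t₂) →
      (∀ τ ∈ Set.Icc t₁ t₂, x τ ∈ X) →
      (∀ τ ∈ Set.Icc t₁ t₂, HasDerivAt x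
        (f (x τ) + mv (g (x τ)) (u τ) + mv (k (x τ)) (w τ)) τ) →
      OffPolicyId g k h R γ ui wi W x u w t₁ t₂)
    (hReach : ∀ xbar ∈ X, ∃ T : ℝ, 0 ≤ T ∧ ∃ x : ℝ → EuclideanSpace ℝ (Fin n),
      (∀ τ ∈ Set.Icc (0:ℝ) T, x τ ∈ X ∧ HasDerivAt x
        (f (x τ) + mv (g (x τ)) (ui (x τ)) + mv (k (x τ)) (wi (x τ))) τ)
      ∧ x 0 = 0 ∧ x T = xbar) :
    ∀ xbar ∈ X, V xbar = W xbar := by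
  intro xbar hxbar
  obtain ⟨T, hT, x, hx, hx0, rfl⟩ := hReach xbar hxbar
  have hmem : ∀ τ ∈ Set.Icc (0:ℝ) T, x τ ∈ X := fun τ hτ => (hx τ hτ).1
  have hderiv : ∀ τ ∈ Set.Icc (0:ℝ) T, HasDerivAt x
      (f (x τ) + mv (g (x τ)) ((ui ∘ x) τ) + mv (k (x τ)) ((wi ∘ x) τ)) τ :=
    fun τ hτ => (hx τ hτ).2
  have huc := hui.comp_continuousOn_of_hasDerivAt hderiv
  have hwc := hwi.comp_continuousOn_of_hasDerivAt hderiv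
  have hincr := (hIdV x _ _ 0 T hT huc hwc hmem hderiv).sub_eq_sub_of_closedLoop
    (hIdW x _ _ 0 T hT huc hwc hmem hderiv)
  rw [hx0, hV0, hW0] at hincr
  linarith

/-- **Uniqueness conclusion of Theorem 1.**  If `V` and `W` are continuously differentiable,
vanish at the origin, satisfy the off-policy integral identity along every trajectory
remaining in `X`, and every point of `X` is reachable from the origin along a closed-loop
trajectory in `X`, then `V = W` on `X`. -/
theorem off_policy_solution_unique {n m q p : ℕ}
    (f : EuclideanSpace ℝ (Fin n) → EuclideanSpace ℝ (Fin n))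
    (g : EuclideanSpace ℝ (Fin n) → Matrix (Fin n) (Fin m) ℝ)
    (k : EuclideanSpace ℝ (Fin n) → Matrix (Fin n) (Fin q) ℝ)
    (h : EuclideanSpace ℝ (Fin n) → EuclideanSpace ℝ (Fin p))
    (R : Matrix (Fin m) (Fin m) ℝ) (hR : R.PosDef)
    (γ : ℝ) (hγ : 0 < γ)
    (X : Set (EuclideanSpace ℝ (Fin n))) (hX0 : (0 : EuclideanSpace ℝ (Fin n)) ∈ X)
    (ui : EuclideanSpace ℝ (Fin n) → EuclideanSpace ℝ (Fin m)) (hui : Continuous ui)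
    (wi : EuclideanSpace ℝ (Fin n) → EuclideanSpace ℝ (Fin q)) (hwi : Continuous wi)
    (V W : EuclideanSpace ℝ (Fin n) → ℝ)
    (hV : ContDiff ℝ 1 V) (hW : ContDiff ℝ 1 W)
    (hV0 : V 0 = 0) (hW0 : W 0 = 0)
    (hIdV : ∀ (x : ℝ → EuclideanSpace ℝ (Fin n)) (u : ℝ → EuclideanSpace ℝ (Fin m))
        (w : ℝ → EuclideanSpace ℝ (Fin q)) (t₁ t₂ : ℝ), t₁ ≤ t₂ →
      ContinuousOn u (Set.Icc t₁ t₂) → ContinuousOn w (Set.Icc t₁ t₂) →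
      (∀ τ ∈ Set.Icc t₁ t₂, x τ ∈ X) →
      (∀ τ ∈ Set.Icc t₁ t₂, HasDerivAt x
        (f (x τ) + mv (g (x τ)) (u τ) + mv (k (x τ)) (w τ)) τ) →
      OffPolicyId g k h R γ ui wi V x u w t₁ t₂)
    (hIdW : ∀ (x : ℝ → EuclideanSpace ℝ (Fin n)) (u : ℝ → EuclideanSpace ℝ (Fin m))
        (w : ℝ → EuclideanSpace ℝ (Fin q)) (t₁ t₂ : ℝ), t₁ ≤ t₂ →
      ContinuousOn u (Set.Icc t₁ t₂) → ContinuousOn w (Set.Icc t₁ t₂) →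
      (∀ τ ∈ Set.Icc t₁ t₂, x τ ∈ X) →
      (∀ τ ∈ Set.Icc t₁ t₂, HasDerivAt x
        (f (x τ) + mv (g (x τ)) (u τ) + mv (k (x τ)) (w τ)) τ) →
      OffPolicyId g k h R γ ui wi W x u w t₁ t₂)
    (hReach : ∀ xbar ∈ X, ∃ T : ℝ, 0 ≤ T ∧ ∃ x : ℝ → EuclideanSpace ℝ (Fin n),
      (∀ τ ∈ Set.Icc (0:ℝ) T, x τ ∈ X ∧ HasDerivAt x
        (f (x τ) + mv (g (x τ)) (ui (x τ)) + mv (k (x τ)) (wi (x τ))) τ)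
      ∧ x 0 = 0 ∧ x T = xbar) :
    ∀ xbar ∈ X, V xbar = W xbar :=
  off_policy_solution_unique_general f g k h R γ X ui hui wi hwi V W hV0 hW0 hIdV hIdW hReach
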